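/- arXiv:2403.20264 — 4 statements merged into one kernel-verified Lean document; each statement's English description precedes it below -/
import Mathlib

section
/- Let S be a set and σ a homogeneous braiding symbol over S. If two words w and w' over S represent the same element of the free group on S (that is, the products s₁^{ε₁}⋯s_n^{ε_n} formed from their letters are equal in the free group F_S), then the letter-braiding values agree: σ(w) = σ(w'). Consequently every letter-braiding function descends to a well-defined function on the free group F_S. -/
namespace Braiding

variable {S : Type*}

/-- A word over `S`: a list of letters, each a generator together with an exponent,
`true` standing for `+1` and `false` for `-1`. Positions are indexed from `0`. -/
abbrev Word (S : Type*) := List (S × Bool)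

/-- The rational sign of an exponent: `+1` for `true`, `-1` for `false`. -/
def sgn (b : Bool) : ℚ := if b then 1 else -1

/-- The exponent of the letter at position `j` (junk value `true` out of range). -/
def epsAt (w : Word S) (j : ℕ) : Bool := (w[j]?.map Prod.snd).getD true

/-- The induced d-function `w*h` of a homomorphism datum `h : S → ℚ`:
`(w*h)(i) = εᵢ · h(sᵢ)` (and `0` out of range). -/
def indD (h : S → ℚ) (w : Word S) (i : ℕ) : ℚ :=
  match w[i]? with
  | some (s, b) => sgn b * h s
  | none => 0

/-- The relation `i ≤_w j`: `i < j` if `ε_j = +1`, and `i ≤ j` if `ε_j = -1`. -/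
def leW (w : Word S) (i j : ℕ) : Prop :=
  if epsAt w j = true then i < j else i ≤ j

instance (w : Word S) (i j : ℕ) : Decidable (leW w i j) := by
  unfold leW; infer_instance

/-- The cobounding `⌊f⌉_w(j) = Σ_{i ≤_w j} f(i)` of a d-function. -/
def cobound (w : Word S) (f : ℕ → ℚ) (j : ℕ) : ℚ :=
  ∑ i ∈ Finset.range w.length, if leW w i j then f i else 0

/-- The braiding product `(⌊f⌉_w g)(j) = ⌊f⌉_w(j) · g(j)`. -/
def braidMul (w : Word S) (f g : ℕ → ℚ) (j : ℕ) : ℚ := cobound w f j * g j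

/-- The discrete integral `∫ f = Σ_{i=1}^{n} f(i)` of a d-function on a word of length `n`. -/
def integ (w : Word S) (f : ℕ → ℚ) : ℚ := ∑ i ∈ Finset.range w.length, f i

/-- Homogeneous braiding symbols over `S`: every `h : S → ℚ` is one (of weight 1),
and braiding products `⌊α⌉β` of homogeneous braiding symbols are ones. -/
inductive HSymbol (S : Type*) where
  | leaf : (S → ℚ) → HSymbol S
  | node : HSymbol S → HSymbol S → HSymbol S

namespace HSymbol

/-- The weight (number of decorating functions) of a homogeneous braiding symbol. -/
def weight : HSymbol S → ℕ
  | leaf _ => 1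
  | node α β => weight α + weight β

/-- The associated d-function `w*σ` of a homogeneous braiding symbol on a word `w`. -/
def dfun (w : Word S) : HSymbol S → ℕ → ℚ
  | leaf h => indD h w
  | node α β => braidMul w (dfun w α) (dfun w β)

/-- The letter-braiding value `σ(w) = ∫ w*σ`. -/
def value (σ : HSymbol S) (w : Word S) : ℚ := integ w (σ.dfun w)

end HSymbol

/-- The element of the free group `F_S` represented by a word:
the product `s₁^{ε₁} ⋯ s_n^{ε_n}`. -/
def wordProd (w : Word S) : FreeGroup S :=
  (w.map (fun p => if p.2 then FreeGroup.of p.1 else (FreeGroup.of p.1)⁻¹)).prod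

end Braiding
namespace Braiding

variable {S : Type*}

private lemma psum_ite (f : ℕ → ℚ) (n J : ℕ) :
    (∑ i ∈ Finset.range n, if i < J then f i else 0)
      = ∑ i ∈ Finset.range (min J n), f i := by
  induction n with
  | zero => simp
  | succ n ih =>
    rw [Finset.sum_range_succ, ih]
    rcases lt_or_ge n J with h | h
    · rw [if_pos h]
      have h1 : min J (n+1) = (min J n) + 1 := by omega
      rw [h1, Finset.sum_range_succ]
      congr 2
      omega
    · rw [if_neg (by omega), add_zero]
      have h2 : min J (n+1) = min J n := by omega
      rw [h2]

/-- The cutoff `J` such that `i ≤_w j ↔ i < J`. -/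
def Jfun (w : Word S) (j : ℕ) : ℕ := if epsAt w j then j else j + 1

private lemma leW_iff (w : Word S) (i j : ℕ) : leW w i j ↔ i < Jfun w j := by
  unfold leW Jfun
  cases epsAt w j <;> simp <;> omega

private lemma Jfun_le (w : Word S) {j : ℕ} (hj : j < w.length) : Jfun w j ≤ w.length := by
  unfold Jfun; split <;> omega

private lemma cobound_eq (w : Word S) (f : ℕ → ℚ) {j : ℕ} (hj : j < w.length) :
    cobound w f j = ∑ i ∈ Finset.range (Jfun w j), f i := by
  unfold cobound
  have h : ∀ i, (if leW w i j then f i else 0) = (if i < Jfun w j then f i else 0) := by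
    intro i; simp only [leW_iff]
  simp only [h]
  rw [psum_ite]
  have h2 : min (Jfun w j) w.length = Jfun w j := min_eq_left (Jfun_le w hj)
  rw [h2]

section Step

variable (u v : Word S) (x : S) (b : Bool)

private lemma get_lt (t : Word S) {i : ℕ} (hi : i < u.length) :
    (u ++ t)[i]? = u[i]? := by
  rw [List.getElem?_append, if_pos hi]

private lemma get_pair0 : (u ++ (x,b) :: (x,!b) :: v)[u.length]? = some (x, b) := by
  rw [List.getElem?_append_right le_rfl]; simp

private lemma get_pair1 : (u ++ (x,b) :: (x,!b) :: v)[u.length + 1]? = some (x, !b) := by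
  rw [List.getElem?_append_right (by omega)]
  have h : u.length + 1 - u.length = 1 := by omega
  rw [h]; simp

private lemma get_hi (i : ℕ) :
    (u ++ (x,b) :: (x,!b) :: v)[u.length + 2 + i]? = (u ++ v)[u.length + i]? := by
  rw [List.getElem?_append_right (by omega : u.length ≤ u.length + 2 + i),
      List.getElem?_append_right (by omega : u.length ≤ u.length + i)]
  have h1 : u.length + 2 + i - u.length = i + 1 + 1 := by omega
  have h2 : u.length + i - u.length = i := by omega
  rw [h1, h2, List.getElem?_cons_succ, List.getElem?_cons_succ]

private lemma eps_lt {i : ℕ} (hi : i < u.length) :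
    epsAt (u ++ (x,b) :: (x,!b) :: v) i = epsAt (u ++ v) i := by
  unfold epsAt
  rw [get_lt u ((x,b) :: (x,!b) :: v) hi, get_lt u v hi]

private lemma eps_hi (i : ℕ) :
    epsAt (u ++ (x,b) :: (x,!b) :: v) (u.length + 2 + i) = epsAt (u ++ v) (u.length + i) := by
  unfold epsAt
  rw [get_hi u v x b i]

private lemma eps_pair0 : epsAt (u ++ (x,b) :: (x,!b) :: v) u.length = b := by
  unfold epsAt; rw [get_pair0]; rfl

private lemma eps_pair1 : epsAt (u ++ (x,b) :: (x,!b) :: v) (u.length + 1) = !b := by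
  unfold epsAt; rw [get_pair1]; rfl

private lemma dfun_props (σ : HSymbol S) :
    (∀ i < u.length,
      σ.dfun (u ++ (x,b) :: (x,!b) :: v) i = σ.dfun (u ++ v) i) ∧
    (∀ i, σ.dfun (u ++ (x,b) :: (x,!b) :: v) (u.length + 2 + i)
        = σ.dfun (u ++ v) (u.length + i)) ∧
    (σ.dfun (u ++ (x,b) :: (x,!b) :: v) u.length
      + σ.dfun (u ++ (x,b) :: (x,!b) :: v) (u.length + 1) = 0) := by
  set m := u.length with hm
  set w' : Word S := u ++ (x,b) :: (x,!b) :: v with hw'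
  set w : Word S := u ++ v with hw
  have hlen' : w'.length = m + 2 + v.length := by simp [hw', hm]; omega
  have hlen : w.length = m + v.length := by simp [hw, hm]
  induction σ with
  | leaf h =>
    refine ⟨?_, ?_, ?_⟩
    · intro i hi
      unfold HSymbol.dfun indD
      rw [get_lt u ((x,b) :: (x,!b) :: v) hi, get_lt u v hi]
    · intro i
      unfold HSymbol.dfun indD
      rw [get_hi u v x b i]
    · unfold HSymbol.dfun indD
      rw [get_pair0, get_pair1]
      cases b <;> simp [sgn]
  | node α β ihα ihβ =>
    obtain ⟨a1, a2, a3⟩ := ihα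
    obtain ⟨b1, b2, b3⟩ := ihβ
    set f' := α.dfun w' with hf'
    set f := α.dfun w with hf
    set g' := β.dfun w' with hg'
    set g := β.dfun w with hg
    -- partial sums
    have p1 : ∀ t ≤ m, (∑ i ∈ Finset.range t, f' i) = ∑ i ∈ Finset.range t, f i := by
      intro t ht
      apply Finset.sum_congr rfl
      intro i hi
      exact a1 i (by simp at hi; omega)
    have p2 : ∀ s, (∑ i ∈ Finset.range (m + 2 + s), f' i) = ∑ i ∈ Finset.range (m + s), f i := by
      intro s
      rw [Finset.sum_range_add f' (m+2) s, Finset.sum_range_add f m s,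
          Finset.sum_range_succ f' (m+1), Finset.sum_range_succ f' m]
      have e : (∑ i ∈ Finset.range s, f' (m + 2 + i)) = ∑ i ∈ Finset.range s, f (m + i) :=
        Finset.sum_congr rfl fun i _ => a2 i
      rw [e, p1 m le_rfl, add_assoc (∑ i ∈ Finset.range m, f i), a3, add_zero]
    -- cobound comparisons
    have c1 : ∀ i < m, cobound w' f' i = cobound w f i := by
      intro i hi
      rw [cobound_eq w' f' (by omega), cobound_eq w f (by omega)]
      have hJ : Jfun w' i = Jfun w i := by
        unfold Jfun; rw [eps_lt u v x b hi]
      rw [hJ]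
      exact p1 _ (by unfold Jfun; split <;> omega)
    have c2 : ∀ i, cobound w' f' (m + 2 + i) = cobound w f (m + i) := by
      intro i
      by_cases hi : i < v.length
      · rw [cobound_eq w' f' (by omega), cobound_eq w f (by omega)]
        have hJ : Jfun w' (m + 2 + i) = Jfun w (m + i) + 2 := by
          unfold Jfun; rw [eps_hi u v x b i]; split <;> omega
        rw [hJ]
        have hge : m ≤ Jfun w (m + i) := by unfold Jfun; split <;> omega
        obtain ⟨r, hr⟩ : ∃ r, Jfun w (m + i) = m + r := ⟨Jfun w (m+i) - m, by omega⟩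
        rw [hr]
        have : m + r + 2 = m + 2 + r := by omega
        rw [this]
        exact p2 r
      · -- out of range: both cobounds are full sums
        unfold cobound
        have e1 : ∀ j, j ∈ Finset.range w'.length → leW w' j (m + 2 + i) := by
          intro j hj
          simp at hj
          unfold leW; split <;> omega
        have e2 : ∀ j, j ∈ Finset.range w.length → leW w j (m + i) := by
          intro j hj
          simp at hj
          unfold leW; split <;> omega
        rw [Finset.sum_congr rfl (fun j hj => if_pos (e1 j hj)),
            Finset.sum_congr rfl (fun j hj => if_pos (e2 j hj))]
        rw [hlen', hlen]
        exact p2 v.length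
    have c3 : cobound w' f' m = cobound w' f' (m + 1) := by
      rw [cobound_eq w' f' (by omega), cobound_eq w' f' (by omega)]
      have hJ0 : Jfun w' m = if b then m else m + 1 := by
        unfold Jfun; rw [eps_pair0]
      have hJ1 : Jfun w' (m+1) = if b then m + 2 else m + 1 := by
        unfold Jfun; rw [eps_pair1]; cases b <;> simp
      rw [hJ0, hJ1]
      cases b
      · simp
      · simp only [if_pos rfl, if_true]
        rw [Finset.sum_range_succ, Finset.sum_range_succ, add_assoc, a3, add_zero]
    refine ⟨?_, ?_, ?_⟩
    · intro i hi
      show cobound w' f' i * g' i = cobound w f i * g i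
      rw [c1 i hi, b1 i hi]
    · intro i
      show cobound w' f' (m+2+i) * g' (m+2+i) = cobound w f (m+i) * g (m+i)
      rw [c2 i, b2 i]
    · show cobound w' f' m * g' m + cobound w' f' (m+1) * g' (m+1) = 0
      rw [← c3, ← mul_add, b3, mul_zero]

private lemma value_step (σ : HSymbol S) :
    σ.value (u ++ (x,b) :: (x,!b) :: v) = σ.value (u ++ v) := by
  obtain ⟨a1, a2, a3⟩ := dfun_props u v x b σ
  unfold HSymbol.value integ
  have hlen' : (u ++ (x,b) :: (x,!b) :: v).length = u.length + 2 + v.length := by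
    simp; omega
  have hlen : (u ++ v).length = u.length + v.length := by simp
  rw [hlen', hlen]
  rw [Finset.sum_range_add _ u.length v.length,
      Finset.sum_range_add _ (u.length + 2) v.length,
      Finset.sum_range_succ, Finset.sum_range_succ]
  have h1 : (∑ i ∈ Finset.range u.length, σ.dfun (u ++ (x,b) :: (x,!b) :: v) i)
      = ∑ i ∈ Finset.range u.length, σ.dfun (u ++ v) i := by
    apply Finset.sum_congr rfl
    intro i hi
    exact a1 i (by simp at hi; omega)
  have h2 : (∑ i ∈ Finset.range v.length, σ.dfun (u ++ (x,b) :: (x,!b) :: v) (u.length + 2 + i))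
      = ∑ i ∈ Finset.range v.length, σ.dfun (u ++ v) (u.length + i) := by
    exact Finset.sum_congr rfl fun i _ => a2 i
  rw [h1, h2, add_assoc (∑ i ∈ Finset.range u.length, HSymbol.dfun (u ++ v) σ i), a3, add_zero]

end Step

private lemma value_red_step (σ : HSymbol S) {L₁ L₂ : Word S}
    (h : FreeGroup.Red.Step L₁ L₂) : σ.value L₁ = σ.value L₂ := by
  cases h with
  | not => exact value_step _ _ _ _ σ

private lemma value_red (σ : HSymbol S) {L₁ L₂ : Word S}
    (h : FreeGroup.Red L₁ L₂) : σ.value L₁ = σ.value L₂ := by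
  induction h with
  | refl => rfl
  | tail _ hstep ih => exact ih.trans (value_red_step σ hstep)

private lemma wordProd_eq_mk (w : Word S) : wordProd w = FreeGroup.mk w := by
  induction w with
  | nil => simp [wordProd]; rfl
  | cons p t ih =>
    obtain ⟨s, bb⟩ := p
    have : wordProd ((s, bb) :: t)
        = (if bb then FreeGroup.of s else (FreeGroup.of s)⁻¹) * wordProd t := by
      simp [wordProd]
    rw [this, ih]
    have hof : FreeGroup.of s = FreeGroup.mk [(s, true)] := rfl
    cases bb
    · rw [if_neg (by simp), hof, FreeGroup.inv_mk]
      have : FreeGroup.invRev [(s, true)] = [(s, false)] := by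
        simp [FreeGroup.invRev]
      rw [this, FreeGroup.mul_mk]
      rfl
    · rw [if_pos rfl, hof, FreeGroup.mul_mk]
      rfl

end Braiding

open Braiding in
/-- If two words over `S` represent the same element of the free group
`F_S`, then the letter-braiding values of any homogeneous braiding symbol on them agree;
hence every letter-braiding function descends to a well-defined function on `F_S`. -/
theorem letterBraiding_descends_to_freeGroup {S : Type*} (σ : HSymbol S)
    (w w' : Word S) (h : wordProd w = wordProd w') :
    σ.value w = σ.value w' := by
  rw [wordProd_eq_mk, wordProd_eq_mk] at h
  obtain ⟨c, hc1, hc2⟩ := FreeGroup.Red.exact.mp h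
  rw [value_red σ hc1, value_red σ hc2]
end

section
/- Let S be a set, σ a homogeneous braiding symbol over S with associated decorated rooted tree T(σ), and w = (s₁^{ε₁}, …, s_n^{ε_n}) a word over S. Call a function c from the vertices of T(σ) to {1,…,n} a proper configuration if for every pair of vertices u < v in the tree order one has c(u) ≤_w c(v). Then the letter-braiding value counts proper configurations: σ(w) = Σ over proper configurations c of ∏ over vertices v of T(σ) of ε_{c(v)}·h_v(s_{c(v)}), where h_v is the function decorating v. -/
namespace Braiding

variable {S : Type*}

namespace HSymbol

/-- The vertex set of the rooted tree `T(σ)` of a homogeneous braiding symbol: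
a leaf symbol has a single vertex; for `⌊α⌉β` the tree of `α` is grafted onto the
root of the tree of `β`. -/
def Vertex : HSymbol S → Type
  | leaf _ => Unit
  | node α β => Vertex α ⊕ Vertex β

def vDecEq : (σ : HSymbol S) → DecidableEq (Vertex σ)
  | leaf _ => inferInstanceAs (DecidableEq Unit)
  | node α β =>
      letI := vDecEq α
      letI := vDecEq β
      inferInstanceAs (DecidableEq (Vertex α ⊕ Vertex β))

instance (σ : HSymbol S) : DecidableEq (Vertex σ) := vDecEq σ

def vFintype : (σ : HSymbol S) → Fintype (Vertex σ)
  | leaf _ => inferInstanceAs (Fintype Unit)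
  | node α β =>
      letI := vFintype α
      letI := vFintype β
      inferInstanceAs (Fintype (Vertex α ⊕ Vertex β))

instance (σ : HSymbol S) : Fintype (Vertex σ) := vFintype σ

/-- The root of the tree `T(σ)`. -/
def root : (σ : HSymbol S) → Vertex σ
  | leaf _ => ()
  | node _ β => Sum.inr (root β)

/-- The decorating function `h_v : S → ℚ` at a vertex. -/
def dec : (σ : HSymbol S) → Vertex σ → (S → ℚ)
  | leaf h, _ => h
  | node α _, Sum.inl u => dec α u
  | node _ β, Sum.inr u => dec β u

/-- The strict tree order on `T(σ)`: `u < v` iff `u ≠ v` and `v` lies on the path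
from `u` to the root. -/
def treeLT : (σ : HSymbol S) → Vertex σ → Vertex σ → Prop
  | leaf _, _, _ => False
  | node α _, Sum.inl u, Sum.inl v => treeLT α u v
  | node _ β, Sum.inl _, Sum.inr v => v = root β
  | node _ _, Sum.inr _, Sum.inl _ => False
  | node _ β, Sum.inr u, Sum.inr v => treeLT β u v

def treeLTDec : (σ : HSymbol S) → (u v : Vertex σ) → Decidable (treeLT σ u v)
  | leaf _, _, _ => inferInstanceAs (Decidable False)
  | node α _, Sum.inl u, Sum.inl v => treeLTDec α u v
  | node _ β, Sum.inl _, Sum.inr v => inferInstanceAs (Decidable (v = root β))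
  | node _ _, Sum.inr _, Sum.inl _ => inferInstanceAs (Decidable False)
  | node _ β, Sum.inr u, Sum.inr v => treeLTDec β u v

instance (σ : HSymbol S) (u v : Vertex σ) : Decidable (treeLT σ u v) := treeLTDec σ u v

end HSymbol

end Braiding
/-!
By induction on `σ`, the value `(w*σ)(j)` is the total weight of the proper configurations of
`T(σ)` sending the root to `j`. For `⌊α⌉β` the product `⌊w*α⌉_w(j) · (w*β)(j)` expands into a
sum over pairs of configurations of `T(α)` and `T(β)` with `c_α(root α) ≤_w c_β(root β) = j`;
this is exactly properness on the new edge, and the other new relations follow by transitivity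
of `≤_w`. Summing over `j` gives `σ(w)`.
-/

namespace Braiding

theorem sum_ite_sum_ite_fiber {X Y R : Type*} [Fintype X] [Fintype Y] [DecidableEq Y]
    [AddCommMonoid R] (P : X → Prop) [DecidablePred P] (Q : Y → Prop) [DecidablePred Q]
    (g : X → Y) (W : X → R) :
    ∑ y, (if Q y then ∑ x, (if P x ∧ g x = y then W x else 0) else 0) =
      ∑ x, if P x ∧ Q (g x) then W x else 0 := by
  have hpush : ∀ y, (if Q y then ∑ x, (if P x ∧ g x = y then W x else 0) else 0) =
      ∑ x, if g x = y then (if P x ∧ Q (g x) then W x else 0) else 0 := by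
    intro y
    split_ifs with hy
    · refine Finset.sum_congr rfl fun x _ => ?_
      by_cases hx : g x = y <;> simp [hx, hy]
    · refine (Finset.sum_eq_zero fun x _ => ?_).symm
      by_cases hx : g x = y <;> simp [hx, hy]
  simp only [hpush]
  rw [Finset.sum_comm]
  simp only [Finset.sum_ite_eq, Finset.mem_univ, if_true]

theorem sum_mul_sum_eq_sum_sumArrow {ι κ X R : Type*} [Fintype ι] [Fintype κ] [Fintype X]
    [DecidableEq ι] [DecidableEq κ] [NonUnitalNonAssocSemiring R]
    (f : (ι → X) → R) (g : (κ → X) → R) :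
    (∑ a, f a) * (∑ b, g b) = ∑ c : ι ⊕ κ → X, f (c ∘ Sum.inl) * g (c ∘ Sum.inr) := by
  rw [Finset.sum_mul_sum, ← Fintype.sum_prod_type']
  exact ((Equiv.sumArrowEquivProdArrow ι κ X).sum_comp fun p => f p.1 * g p.2).symm

variable {S : Type*}

theorem leW_le {w : Word S} {i j : ℕ} (h : leW w i j) : i ≤ j := by
  unfold leW at h
  split at h <;> omega

theorem leW_trans {w : Word S} {i j k : ℕ} (hij : leW w i j) (hjk : leW w j k) : leW w i k := by
  have := leW_le hij
  unfold leW at hjk ⊢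
  split at hjk <;> simp_all <;> omega

theorem cobound_eq_sum_fin (w : Word S) (f : ℕ → ℚ) (j : ℕ) :
    cobound w f j = ∑ i : Fin w.length, if leW w i j then f i else 0 :=
  (Fin.sum_univ_eq_sum_range (fun i => if leW w i j then f i else 0) _).symm

theorem integ_eq_sum_fin (w : Word S) (f : ℕ → ℚ) :
    integ w f = ∑ i : Fin w.length, f i :=
  (Fin.sum_univ_eq_sum_range f _).symm

theorem indD_fin (h : S → ℚ) (w : Word S) (i : Fin w.length) :
    indD h w i = sgn (w.get i).2 * h (w.get i).1 := by
  simp [indD]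

namespace HSymbol

theorem treeLT_root : ∀ (σ : HSymbol S) (u : Vertex σ), u ≠ root σ → treeLT σ u (root σ)
  | leaf _, _, hu => absurd rfl hu
  | node _ _, Sum.inl _, _ => rfl
  | node _ β, Sum.inr u, hu => treeLT_root β u fun h => hu (congrArg Sum.inr h)

variable (w : Word S)

def IsProperConfig (σ : HSymbol S) (c : Vertex σ → Fin w.length) : Prop :=
  ∀ u v : Vertex σ, treeLT σ u v → leW w (c u) (c v)

instance (σ : HSymbol S) : DecidablePred (IsProperConfig w σ) := fun _ => by
  unfold IsProperConfig; infer_instance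

def configWeight (σ : HSymbol S) (c : Vertex σ → Fin w.length) : ℚ :=
  ∏ v : Vertex σ, sgn (w.get (c v)).2 * σ.dec v (w.get (c v)).1

theorem isProperConfig_leaf (h : S → ℚ) (c : Vertex (leaf h) → Fin w.length) :
    IsProperConfig w (leaf h) c :=
  fun _ _ => False.elim

theorem isProperConfig_node_iff (α β : HSymbol S) (c : Vertex (node α β) → Fin w.length) :
    IsProperConfig w (node α β) c ↔
      IsProperConfig w α (c ∘ Sum.inl) ∧ IsProperConfig w β (c ∘ Sum.inr) ∧
        leW w (c (Sum.inl (root α))) (c (Sum.inr (root β))) := by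
  constructor
  · intro hc
    exact ⟨fun u v huv => hc (Sum.inl u) (Sum.inl v) huv,
      fun u v huv => hc (Sum.inr u) (Sum.inr v) huv, hc (Sum.inl (root α)) (Sum.inr (root β)) rfl⟩
  · rintro ⟨hα, hβ, hroots⟩ (u | u) (v | v) huv
    · exact hα u v huv
    · obtain rfl : v = root β := huv
      by_cases hu : u = root α
      · exact hu ▸ hroots
      · exact leW_trans (hα u (root α) (treeLT_root α u hu)) hroots
    · exact huv.elim
    · exact hβ u v huv

theorem configWeight_node (α β : HSymbol S) (c : Vertex (node α β) → Fin w.length) :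
    configWeight w (node α β) c = configWeight w α (c ∘ Sum.inl) * configWeight w β (c ∘ Sum.inr) :=
  Fintype.prod_sum_type _

theorem dfun_eq_sum_isProperConfig_root_eq (σ : HSymbol S) (j : Fin w.length) :
    σ.dfun w j =
      ∑ c, if IsProperConfig w σ c ∧ c (root σ) = j then configWeight w σ c else 0 := by
  induction σ generalizing j with
  | leaf h =>
    rw [Fintype.sum_eq_single (fun _ => j) fun c hc => if_neg fun hcj => hc (funext fun _ => hcj.2)]
    simp only [dfun, indD_fin, isProperConfig_leaf, configWeight, dec, true_and, if_pos]
    rw [Finset.prod_const]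
    exact (pow_one _).symm
  | node α β ihα ihβ =>
    calc (node α β).dfun w j
        = (∑ i : Fin w.length, if leW w i j then α.dfun w i else 0) * β.dfun w j := by
          rw [dfun, braidMul, cobound_eq_sum_fin]
      _ = (∑ a, if IsProperConfig w α a ∧ leW w (a (root α)) j then configWeight w α a else 0) *
          ∑ b, if IsProperConfig w β b ∧ b (root β) = j then configWeight w β b else 0 := by
          simp only [ihα, ihβ, sum_ite_sum_ite_fiber]
      _ = ∑ c, if IsProperConfig w (node α β) c ∧ c (root (node α β)) = j
            then configWeight w (node α β) c else 0 := by
          rw [sum_mul_sum_eq_sum_sumArrow]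
          refine Finset.sum_congr rfl fun (c : Vertex (node α β) → Fin w.length) _ => ?_
          rw [ite_zero_mul_ite_zero, configWeight_node]
          refine if_congr ?_ rfl rfl
          rw [isProperConfig_node_iff]
          constructor
          · rintro ⟨⟨hα, hroots⟩, hβ, hj : c (Sum.inr (root β)) = j⟩
            exact ⟨⟨hα, hβ, hj ▸ hroots⟩, hj⟩
          · rintro ⟨⟨hα, hβ, hroots⟩, hj : c (Sum.inr (root β)) = j⟩
            exact ⟨⟨hα, hj ▸ hroots⟩, hβ, hj⟩

end HSymbol

end Braiding

open Braiding Braiding.HSymbol in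
/-- Letter-braiding values count proper configurations of the decorated
rooted tree `T(σ)` in the word `w`: a configuration `c` from the vertices of `T(σ)` to
positions of `w` is proper if `u < v` in the tree order implies `c(u) ≤_w c(v)`, and
`σ(w) = Σ_{proper c} Π_v ε_{c(v)} · h_v(s_{c(v)})`. -/
theorem letterBraiding_counts_proper_configurations {S : Type*}
    (σ : HSymbol S) (w : Word S) :
    σ.value w =
      ∑ c ∈ Finset.univ.filter
          (fun c : Vertex σ → Fin w.length =>
            ∀ u v : Vertex σ, treeLT σ u v → leW w (c u) (c v)),
        ∏ v : Vertex σ, sgn (w.get (c v)).2 * σ.dec v (w.get (c v)).1 := by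
  rw [value, integ_eq_sum_fin]
  simp only [dfun_eq_sum_isProperConfig_root_eq, ← Finset.sum_filter, ← Finset.filter_filter]
  exact Finset.sum_fiberwise _ _ _
end

section
/- Let S be a set, σ a homogeneous braiding symbol over S with decorated rooted tree T(σ), and w = (s₁^{ε₁}, …, s_n^{ε_n}) a word over S. Run the following one-pass algorithm: to each vertex v of T(σ) assign counters Σ_v, Δ_v ∈ ℚ, both initialized to 0; for i = 1, …, n process the letter sᵢ^{εᵢ} by visiting every vertex v of T(σ), each vertex visited only after all of its children have been visited for this letter, and performing: (1) Σ_v ← Σ_v + Δ_v and Δ_v ← 0; (2) m ← εᵢ·h_v(sᵢ)·∏_{c a child of v} Σ_c (the empty product being 1); (3) if εᵢ = −1 then Σ_v ← Σ_v + m, and if εᵢ = +1 then Δ_v ← Δ_v + m. Then: (a) for every 1 ≤ i ≤ n and every vertex v, after the letters 1, …, i have been processed the value of Σ_v equals ⌊w*Φ_v⌉_w(i), the cobounding at i of the d-function of the subsymbol Φ_v supported at v; and (b) after all n letters have been processed, Σ_r + Δ_r = σ(w), where r is the root of T(σ). -/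
namespace Braiding
namespace HSymbol

variable {S : Type*}

/-- The subsymbol `Φ_v` supported at a vertex `v`: the symbol corresponding to the
subtree consisting of `v` together with all of its descendants. -/
def sub : (σ : HSymbol S) → Vertex σ → HSymbol S
  | leaf h, _ => leaf h
  | node α _, Sum.inl u => sub α u
  | node α β, Sum.inr u => if u = root β then node α β else sub β u

/-- One step of the one-pass evaluation algorithm: process a single letter `(s, e)`
(`e = true` meaning exponent `+1`), updating counters `(Σ_v, Δ_v)` at every vertex,
children being processed before their parents.  The extra factor `extra` multiplies
the quantity `m` computed at the root (used to graft subtrees recursively):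
at each vertex one performs
(1) `Σ_v += Δ_v; Δ_v := 0`;
(2) `m := ε·h_v(s)·Π_{c child of v} Σ_c` (new values of `Σ_c`);
(3) if `ε = -1` then `Σ_v += m` else `Δ_v += m`. -/
def procAux : (σ : HSymbol S) → S × Bool → ℚ → (Vertex σ → ℚ) → (Vertex σ → ℚ) →
    (Vertex σ → ℚ) × (Vertex σ → ℚ)
  | leaf h, (s, e), extra, Sv, Dv =>
      let S1 := Sv () + Dv ()
      let m := (if e then (1 : ℚ) else -1) * h s * extra
      if e then (fun _ => S1, fun _ => m) else (fun _ => S1 + m, fun _ => 0)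
  | node α β, (s, e), extra, Sv, Dv =>
      let pa := procAux α (s, e) 1 (Sv ∘ Sum.inl) (Dv ∘ Sum.inl)
      let pb := procAux β (s, e) (extra * pa.1 (root α)) (Sv ∘ Sum.inr) (Dv ∘ Sum.inr)
      (Sum.elim pa.1 pb.1, Sum.elim pa.2 pb.2)

/-- Running the one-pass algorithm on a word, starting from all counters zero. -/
def runAlg (σ : HSymbol S) (w : Word S) : (Vertex σ → ℚ) × (Vertex σ → ℚ) :=
  w.foldl (fun st p => procAux σ p 1 st.1 st.2) (fun _ => 0, fun _ => 0)

end HSymbol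
end Braiding

/-!
Fix a position `j` with letter `s^ε`, and suppose that before it is processed every vertex
satisfies `Σ_v + Δ_v = ∑_{i<j} f_v(i)`, where `f_v = w*Φ_v`. Step (1) turns `Σ_v` into that
partial sum; since children are visited first, each child then holds `⌊f_c⌉_w(j)`, so the
quantity `m` at `v` is `ε h_v(s) ∏_c ⌊f_c⌉_w(j) = f_v(j)`. Hence the new `Σ_v` is
`⌊f_v⌉_w(j)` and the invariant holds at `j + 1`; at the end `Σ_r + Δ_r = ∫ w*σ`.
Along the recursion over `⌊α⌉β` the root of `α` is a child of the root of `β`, so the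
induction over symbols carries the product of the coboundings of grafted children as an
extra factor at the root.
-/

namespace Braiding

open Finset

variable {S : Type*}

theorem sum_range_ite_lt {M : Type*} [AddCommMonoid M] (f : ℕ → M) {m n : ℕ} (h : m ≤ n) :
    ∑ i ∈ range n, (if i < m then f i else 0) = ∑ i ∈ range m, f i := by
  rw [← sum_filter]
  congr 1
  ext i
  simp only [mem_filter, mem_range]
  omega

theorem cobound_eq_of_getElem?_eq {w : Word S} {j : ℕ} {s : S} {e : Bool}
    (hj : w[j]? = some (s, e)) (f : ℕ → ℚ) :
    cobound w f j = ∑ i ∈ range j, f i + if e then 0 else f j := by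
  have hlen : j < w.length := (List.getElem?_eq_some_iff.1 hj).1
  have heps : epsAt w j = e := by simp [epsAt, hj]
  simp only [cobound, leW, heps]
  cases e
  · simp only [Bool.false_eq_true, if_false, ← Nat.lt_succ_iff]
    rw [sum_range_ite_lt f hlen, sum_range_succ]
  · simpa using sum_range_ite_lt f hlen.le

namespace HSymbol

theorem sub_root (σ : HSymbol S) : σ.sub σ.root = σ := by
  cases σ <;> simp [sub, root]

/-- The d-function at `v` when the root of `σ` carries further children, grafted from
outside, whose coboundings multiply to `g` (the factor `extra` of `procAux`). -/
def graftedDfun (w : Word S) (g : ℕ → ℚ) (σ : HSymbol S) (v : Vertex σ) : ℕ → ℚ :=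
  if v = σ.root then g * σ.dfun w else (σ.sub v).dfun w

theorem graftedDfun_root (w : Word S) (g : ℕ → ℚ) (σ : HSymbol S) :
    graftedDfun w g σ σ.root = g * σ.dfun w :=
  if_pos rfl

theorem graftedDfun_of_ne_root (w : Word S) (g : ℕ → ℚ) {σ : HSymbol S} {v : Vertex σ}
    (hv : v ≠ σ.root) : graftedDfun w g σ v = (σ.sub v).dfun w :=
  if_neg hv

theorem graftedDfun_one (w : Word S) (σ : HSymbol S) (v : Vertex σ) :
    graftedDfun w 1 σ v = (σ.sub v).dfun w := by
  by_cases hv : v = σ.root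
  · rw [hv, graftedDfun_root, one_mul, sub_root]
  · exact graftedDfun_of_ne_root w 1 hv

theorem graftedDfun_node_inl (w : Word S) (g : ℕ → ℚ) (α β : HSymbol S) (u : Vertex α) :
    graftedDfun w g (node α β) (Sum.inl u) = graftedDfun w 1 α u := by
  rw [graftedDfun_one]
  exact graftedDfun_of_ne_root w g Sum.inl_ne_inr

theorem graftedDfun_node_inr (w : Word S) (g : ℕ → ℚ) (α β : HSymbol S) (u : Vertex β) :
    graftedDfun w g (node α β) (Sum.inr u) = graftedDfun w (g * cobound w (α.dfun w)) β u := by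
  by_cases hu : u = β.root
  · subst hu
    rw [graftedDfun_root, mul_assoc]
    exact graftedDfun_root w g (node α β)
  · rw [graftedDfun_of_ne_root _ _ hu]
    refine (graftedDfun_of_ne_root w g fun h => hu (Sum.inr.inj h)).trans ?_
    simp [sub, hu]

theorem procAux_of_sum_eq {w : Word S} {j : ℕ} {s : S} {e : Bool} (hj : w[j]? = some (s, e))
    (σ : HSymbol S) (g : ℕ → ℚ) {Sv Dv : Vertex σ → ℚ}
    (hsum : ∀ v, Sv v + Dv v = ∑ i ∈ range j, graftedDfun w g σ v i) :
    procAux σ (s, e) (g j) Sv Dv =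
      (fun v => cobound w (graftedDfun w g σ v) j,
       fun v => if e then graftedDfun w g σ v j else 0) := by
  induction σ generalizing g with
  | leaf f =>
    have hF : ∀ v, graftedDfun w g (leaf f) v = g * indD f w := fun _ => graftedDfun_root ..
    have hm : (if e then 1 else -1) * f s * g j = (g * indD f w) j := by
      simp only [Pi.mul_apply, indD, hj, sgn]
      ring
    simp only [hF] at hsum ⊢
    simp only [procAux, cobound_eq_of_getElem?_eq hj, hm, hsum ()]
    cases e <;> simp
  | node α β ihα ihβ =>
    have hα := ihα 1 (Sv := Sv ∘ Sum.inl) (Dv := Dv ∘ Sum.inl) fun u =>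
      (hsum (Sum.inl u)).trans (by rw [graftedDfun_node_inl])
    have hβ := ihβ (g * cobound w (α.dfun w)) (Sv := Sv ∘ Sum.inr) (Dv := Dv ∘ Sum.inr) fun u =>
      (hsum (Sum.inr u)).trans (by rw [graftedDfun_node_inr])
    have hroot : cobound w (graftedDfun w 1 α α.root) j = cobound w (α.dfun w) j := by
      rw [graftedDfun_one, sub_root]
    rw [Pi.one_apply] at hα
    rw [Pi.mul_apply] at hβ
    simp only [procAux, hα, hroot, hβ]
    ext (u | u) <;> simp [graftedDfun_node_inl, graftedDfun_node_inr]

theorem procAux_one_of_sum_eq {w : Word S} {j : ℕ} {s : S} {e : Bool}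
    (hj : w[j]? = some (s, e)) (σ : HSymbol S) {Sv Dv : Vertex σ → ℚ}
    (hsum : ∀ v, Sv v + Dv v = ∑ i ∈ range j, (σ.sub v).dfun w i) :
    procAux σ (s, e) 1 Sv Dv =
      (fun v => cobound w ((σ.sub v).dfun w) j, fun v => if e then (σ.sub v).dfun w j else 0) := by
  simpa only [graftedDfun_one, Pi.one_apply] using
    procAux_of_sum_eq hj σ 1 (by simpa only [graftedDfun_one] using hsum)

theorem runAlg_take_succ {σ : HSymbol S} {w : Word S} {k : ℕ} {s : S} {e : Bool}
    (hk : w[k]? = some (s, e)) :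
    runAlg σ (w.take (k + 1)) =
      procAux σ (s, e) 1 (runAlg σ (w.take k)).1 (runAlg σ (w.take k)).2 := by
  simp [runAlg, List.take_add_one, hk, List.foldl_append]

theorem runAlg_take_fst_add_snd (σ : HSymbol S) (w : Word S) {k : ℕ} (hk : k ≤ w.length)
    (v : Vertex σ) :
    (runAlg σ (w.take k)).1 v + (runAlg σ (w.take k)).2 v = ∑ i ∈ range k, (σ.sub v).dfun w i := by
  induction k generalizing v with
  | zero => simp [runAlg]
  | succ k ih =>
    have hk' : w[k]? = some (w[k].1, w[k].2) := List.getElem?_eq_getElem hk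
    rw [runAlg_take_succ hk', procAux_one_of_sum_eq hk' σ (ih (by omega))]
    simp only [cobound_eq_of_getElem?_eq hk', sum_range_succ]
    cases w[k].2 <;> simp

theorem runAlg_take_succ_fst (σ : HSymbol S) {w : Word S} {i : ℕ} (hi : i < w.length)
    (v : Vertex σ) :
    (runAlg σ (w.take (i + 1))).1 v = cobound w ((σ.sub v).dfun w) i := by
  have hi' : w[i]? = some (w[i].1, w[i].2) := List.getElem?_eq_getElem hi
  rw [runAlg_take_succ hi', procAux_one_of_sum_eq hi' σ (runAlg_take_fst_add_snd σ w hi.le)]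

end HSymbol
end Braiding

open Braiding Braiding.HSymbol in
/-- Positions are indexed from `0`: "after the letters `1, …, i`" is the prefix of
length `i + 1`. -/
theorem one_pass_algorithm_computes_letterBraiding {S : Type*}
    (σ : HSymbol S) (w : Word S) :
    (∀ i < w.length, ∀ v : Vertex σ,
      (runAlg σ (w.take (i + 1))).1 v = cobound w ((σ.sub v).dfun w) i) ∧
    (runAlg σ w).1 σ.root + (runAlg σ w).2 σ.root = σ.value w := by
  refine ⟨fun i hi v => runAlg_take_succ_fst σ hi v, ?_⟩
  have hfinal := runAlg_take_fst_add_snd σ w le_rfl σ.root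
  rwa [List.take_length, sub_root] at hfinal
end

section
/- For n ≥ 1, the ℚ-linear map from Tr(n) to Gr(n) sending a rooted labeled tree (T, r) to the directed tree (T, o_r), where o_r orients every edge of T toward the root r, carries the subspace spanned by the root-change and root-Arnold relations into the subspace spanned by the arrow-reversal and Arnold relations, and it induces an isomorphism of quotient vector spaces Tr(n)/(root change, root Arnold) ≅ Gr(n)/(arrow reversal, Arnold). -/
/-!
Orienting each edge toward the root turns a rooted tree into a directed tree, and an edge
`u → v` points to the root exactly when the root stays on `v`'s side after deleting the edge.
Hence moving the root across an edge reverses that edge alone, and for a forest `F` with three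
components containing `a`, `b`, `c`, every tree that joins the components so that `a`, `b`, `c`
reach the root through the new edges orients `F` in the same way: toward `a`, `b`, `c`.
Rerooting the trees `F + ab + ac`, `F + ab + bc`, `F + ac + bc` of a root-Arnold relation at the
ends of the chains `c–a–b`, `a–b–c`, `b–c–a` reverses one edge in each and produces an Arnold
relation, so root-Arnold relations map into the relations of `Gr(n)`.

The inverse sends a directed tree `D` to `(-1)^k (T, r)`, where `k` counts the edges on which `D`
disagrees with the orientation toward `r`. The parity of `k` is additive, so this class does not
depend on `r` modulo root change, and it kills arrow reversals; it kills Arnold relations because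
the three directed trees of an Arnold relation disagree with the end-rooted chain orientations on
the same edges of `F`. Modulo arrow reversals every directed tree is `±` any other orientation of
its tree, which makes the two maps mutually inverse.
-/

namespace EilTrees

open SimpleGraph

variable {n : ℕ}

/-- A rooted tree on the vertex set `{1, …, n}` (formalized as `Fin n`):
a connected acyclic simple graph together with a chosen root. -/
structure RootedTree (n : ℕ) where
  graph : SimpleGraph (Fin n)
  isTree : graph.IsTree
  root : Fin n

/-- A directed tree on `{1, …, n}`: a connected acyclic simple graph together with an
orientation of each of its edges, recorded as the relation `rel a b` meaning the edge
`{a, b}` is directed from `a` to `b`. -/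
structure DirTree (n : ℕ) where
  graph : SimpleGraph (Fin n)
  isTree : graph.IsTree
  rel : Fin n → Fin n → Prop
  rel_adj : ∀ a b, rel a b → graph.Adj a b
  total : ∀ a b, graph.Adj a b → rel a b ∨ rel b a
  no_both : ∀ a b, rel a b → ¬ rel b a

/-- `Tr(n)`: the `ℚ`-vector space with basis the rooted labeled trees on `{1, …, n}`. -/
abbrev Tr (n : ℕ) := RootedTree n →₀ ℚ

/-- `Gr(n)`: the `ℚ`-vector space with basis the connected acyclic directed graphs on
`{1, …, n}`. -/
abbrev Gr (n : ℕ) := DirTree n →₀ ℚ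

/-- The orientation `o_r` toward the root: the edge `{a, b}` is directed `a → b`
exactly when `b` lies on the (unique) path from `a` to the root. -/
def towardRel (T : RootedTree n) (a b : Fin n) : Prop :=
  T.graph.Adj a b ∧ ∃ p : T.graph.Walk a T.root, p.IsPath ∧ b ∈ p.support

theorem towardRel_total (T : RootedTree n) (a b : Fin n) (hab : T.graph.Adj a b) :
    towardRel T a b ∨ towardRel T b a := by
  obtain ⟨q⟩ := T.isTree.isConnected.preconnected a T.root
  let p := q.toPath
  by_cases hb : b ∈ (p : T.graph.Walk a T.root).support
  · exact Or.inl ⟨hab, p, p.2, hb⟩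
  · refine Or.inr ⟨hab.symm, SimpleGraph.Walk.cons hab.symm (p : T.graph.Walk a T.root),
      ?_, ?_⟩
    · rw [SimpleGraph.Walk.cons_isPath_iff]
      exact ⟨p.2, hb⟩
    · rw [SimpleGraph.Walk.support_cons]
      exact List.mem_cons_of_mem _ ((p : T.graph.Walk a T.root).start_mem_support)

theorem towardRel_no_both (T : RootedTree n) (a b : Fin n) (h : towardRel T a b) :
    ¬ towardRel T b a := by
  rintro ⟨hba, q, hq, haq⟩
  obtain ⟨hab, p, hp, hbp⟩ := h
  -- the path from `b` to the root is unique
  have huniq := (SimpleGraph.isTree_iff_existsUnique_path.mp T.isTree).2 b T.root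
  have hdrop : (p.dropUntil b hbp).IsPath := hp.dropUntil hbp
  have hqeq : q = p.dropUntil b hbp := huniq.unique hq hdrop
  subst hqeq
  -- now `a` appears both in the prefix and the (tail of the) suffix of `p`
  have hspec := SimpleGraph.Walk.take_spec p hbp
  have hnd : p.support.Nodup := hp.support_nodup
  rw [← hspec, SimpleGraph.Walk.support_append] at hnd
  have hdisj := (List.nodup_append.mp hnd).2.2
  have ha1 : a ∈ (p.takeUntil b hbp).support := SimpleGraph.Walk.start_mem_support _
  have ha2 : a ∈ (p.dropUntil b hbp).support.tail := by
    have hcons := SimpleGraph.Walk.support_eq_cons (p.dropUntil b hbp)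
    rw [hcons] at haq
    rcases List.mem_cons.mp haq with h' | h'
    · exact absurd h' hab.ne
    · exact h'
  exact hdisj _ ha1 _ ha2 rfl

/-- The directed tree `(T, o_r)` obtained from a rooted tree by orienting every edge
toward the root. -/
def orient (T : RootedTree n) : DirTree n where
  graph := T.graph
  isTree := T.isTree
  rel := towardRel T
  rel_adj := fun _ _ h => h.1
  total := towardRel_total T
  no_both := towardRel_no_both T

end EilTrees

namespace EilTrees

open SimpleGraph Finsupp

variable {n : ℕ}

/-- A forest on `{1, …, n}` with exactly three connected components, containing the
(necessarily distinct) vertices `a`, `b`, `c` respectively. -/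
def ThreeComponentForest (F : SimpleGraph (Fin n)) (a b c : Fin n) : Prop :=
  F.IsAcyclic ∧
  (∀ v, F.Reachable v a ∨ F.Reachable v b ∨ F.Reachable v c) ∧
  ¬ F.Reachable a b ∧ ¬ F.Reachable a c ∧ ¬ F.Reachable b c

/-- The root-change relations in `Tr(n)`: the vectors `(T, a) + (T, b)` for a tree `T`
and an edge `{a, b}` of `T`. -/
def rootChangeRels (n : ℕ) : Set (Tr n) :=
  {x | ∃ T T' : RootedTree n, T.graph = T'.graph ∧ T.graph.Adj T.root T'.root ∧
        x = single T 1 + single T' 1}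

/-- The root-Arnold relations in `Tr(n)`: the vectors `(T₁, a) + (T₂, b) + (T₃, c)`
where `F` is a forest with exactly three components containing `a`, `b`, `c`, and
`T₁ = F + {a,b} + {a,c}`, `T₂ = F + {a,b} + {b,c}`, `T₃ = F + {a,c} + {b,c}`. -/
def rootArnoldRels (n : ℕ) : Set (Tr n) :=
  {x | ∃ (F : SimpleGraph (Fin n)) (a b c : Fin n) (T₁ T₂ T₃ : RootedTree n),
        ThreeComponentForest F a b c ∧
        T₁.graph = F ⊔ SimpleGraph.fromEdgeSet {s(a, b), s(a, c)} ∧ T₁.root = a ∧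
        T₂.graph = F ⊔ SimpleGraph.fromEdgeSet {s(a, b), s(b, c)} ∧ T₂.root = b ∧
        T₃.graph = F ⊔ SimpleGraph.fromEdgeSet {s(a, c), s(b, c)} ∧ T₃.root = c ∧
        x = single T₁ 1 + single T₂ 1 + single T₃ 1}

/-- The subspace of `Tr(n)` spanned by the root-change and root-Arnold relations. -/
noncomputable def TrRels (n : ℕ) : Submodule ℚ (Tr n) :=
  Submodule.span ℚ (rootChangeRels n ∪ rootArnoldRels n)

/-- The arrow-reversal relations in `Gr(n)`: the vectors `G + G'` where `G'` is obtained
from `G` by reversing the orientation of the single edge `{a, b}`. -/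
def arrowReversalRels (n : ℕ) : Set (Gr n) :=
  {x | ∃ (D D' : DirTree n) (a b : Fin n),
        D.graph = D'.graph ∧ D.rel a b ∧ D'.rel b a ∧
        (∀ u v : Fin n, s(u, v) ≠ s(a, b) → (D.rel u v ↔ D'.rel u v)) ∧
        x = single D 1 + single D' 1}

/-- The Arnold relations in `Gr(n)`: the vectors `G₁ + G₂ + G₃` where `F` is a directed
forest (underlying graph `H`, orientation `ρ`) with exactly three components containing
`a`, `b`, `c`, and `G₁ = F + (a→b) + (b→c)`, `G₂ = F + (b→c) + (c→a)`,
`G₃ = F + (a→b) + (c→a)`. -/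
def arnoldRels (n : ℕ) : Set (Gr n) :=
  {x | ∃ (H : SimpleGraph (Fin n)) (ρ : Fin n → Fin n → Prop) (a b c : Fin n)
        (D₁ D₂ D₃ : DirTree n),
        ThreeComponentForest H a b c ∧
        (∀ u v, ρ u v → H.Adj u v) ∧ (∀ u v, H.Adj u v → ρ u v ∨ ρ v u) ∧
        (∀ u v, ρ u v → ¬ ρ v u) ∧
        D₁.graph = H ⊔ SimpleGraph.fromEdgeSet {s(a, b), s(b, c)} ∧
        (∀ u v, D₁.rel u v ↔ ρ u v ∨ (u = a ∧ v = b) ∨ (u = b ∧ v = c)) ∧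
        D₂.graph = H ⊔ SimpleGraph.fromEdgeSet {s(b, c), s(c, a)} ∧
        (∀ u v, D₂.rel u v ↔ ρ u v ∨ (u = b ∧ v = c) ∨ (u = c ∧ v = a)) ∧
        D₃.graph = H ⊔ SimpleGraph.fromEdgeSet {s(a, b), s(c, a)} ∧
        (∀ u v, D₃.rel u v ↔ ρ u v ∨ (u = a ∧ v = b) ∨ (u = c ∧ v = a)) ∧
        x = single D₁ 1 + single D₂ 1 + single D₃ 1}

/-- The subspace of `Gr(n)` spanned by the arrow-reversal and Arnold relations. -/
noncomputable def GrRels (n : ℕ) : Submodule ℚ (Gr n) :=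
  Submodule.span ℚ (arrowReversalRels n ∪ arnoldRels n)

/-- The `ℚ`-linear map `Tr(n) → Gr(n)` sending a rooted tree `(T, r)` to the directed
tree `(T, o_r)` in which every edge is oriented toward the root. -/
noncomputable def orientMap (n : ℕ) : Tr n →ₗ[ℚ] Gr n :=
  Finsupp.lmapDomain ℚ ℚ (orient (n := n))

end EilTrees

namespace SimpleGraph

variable {V : Type*} {G : SimpleGraph V}

lemma Reachable.deleteEdge_or {u v w : V} (h : G.Reachable u w) :
    (G.deleteEdges {s(u, v)}).Reachable u w ∨ (G.deleteEdges {s(u, v)}).Reachable v w := by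
  set H := G.deleteEdges {s(u, v)}
  have key : ∀ x, G.Walk x w → H.Reachable x w ∨ H.Reachable u w ∨ H.Reachable v w := by
    intro x p
    clear h
    induction p with
    | nil => exact Or.inl .rfl
    | @cons x z w hxz p ih =>
      by_cases he : s(x, z) = s(u, v)
      · rcases Sym2.eq_iff.mp he with ⟨rfl, rfl⟩ | ⟨rfl, rfl⟩ <;> tauto
      · have hadj : H.Adj x z := by simp [H, hxz, he]
        exact ih.imp_left hadj.reachable.trans
  have := key u h.some
  tauto

lemma IsAcyclic.not_reachable_deleteEdge (hG : G.IsAcyclic) {u v : V} (h : G.Adj u v) :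
    ¬ (G.deleteEdges {s(u, v)}).Reachable u v :=
  isBridge_iff.mp (isAcyclic_iff_forall_adj_isBridge.mp hG h)

lemma Preconnected.eq_of_forall_adj {α : Type*} (hG : G.Preconnected) {f : V → α}
    (hf : ∀ u v, G.Adj u v → f u = f v) (u v : V) : f u = f v := by
  obtain ⟨p⟩ := hG u v
  induction p with
  | nil => rfl
  | cons h _ ih => exact (hf _ _ h).trans ih

end SimpleGraph

lemma Set.neg_one_pow_ncard_symmDiff {α R : Type*} [Finite α] [Monoid R] [HasDistribNeg R]
    (s t : Set α) :
    (-1 : R) ^ (symmDiff s t).ncard = (-1) ^ s.ncard * (-1) ^ t.ncard := by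
  have hs := Set.ncard_inter_add_ncard_sdiff_eq_ncard s t
  have ht := Set.ncard_inter_add_ncard_sdiff_eq_ncard t s
  have hst : (symmDiff s t).ncard = (s \ t).ncard + (t \ s).ncard :=
    Set.ncard_union_eq disjoint_sdiff_sdiff
  rw [Set.inter_comm] at ht
  rw [← pow_add, hst, ← hs, ← ht,
    show (s ∩ t).ncard + (s \ t).ncard + ((s ∩ t).ncard + (t \ s).ncard) =
      (s \ t).ncard + (t \ s).ncard + 2 * (s ∩ t).ncard by ring,
    pow_add (-1 : R) _ (2 * _), pow_mul, neg_one_sq, one_pow, mul_one]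

lemma Submodule.Quotient.mk_eq_neg_of_add_mem {R M : Type*} [Ring R] [AddCommGroup M]
    [Module R M] {p : Submodule R M} {x y : M} (h : x + y ∈ p) :
    (Submodule.Quotient.mk x : M ⧸ p) = -Submodule.Quotient.mk y := by
  rwa [← Submodule.Quotient.mk_neg, Submodule.Quotient.eq, sub_neg_eq_add]

namespace EilTrees

open SimpleGraph Finsupp

variable {n : ℕ}

lemma towardRel_of_reachable (T : RootedTree n) {u v : Fin n} (h : T.graph.Adj u v)
    (hv : (T.graph.deleteEdges {s(u, v)}).Reachable v T.root) : towardRel T u v := by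
  obtain ⟨p, hp⟩ := hv.some.toPath
  have hu : u ∉ p.support := fun hu =>
    T.isTree.isAcyclic.not_reachable_deleteEdge h ⟨(p.takeUntil u hu).reverse⟩
  refine ⟨h, .cons h (p.mapLe (deleteEdges_le _)), ?_, by simp⟩
  rw [Walk.cons_isPath_iff, Walk.support_mapLe_eq_support]
  exact ⟨hp.mapLe _, hu⟩

lemma towardRel_iff (T : RootedTree n) {u v : Fin n} :
    towardRel T u v ↔ T.graph.Adj u v ∧ (T.graph.deleteEdges {s(u, v)}).Reachable v T.root := by
  refine ⟨fun h => ⟨h.1, ?_⟩, fun h => towardRel_of_reachable T h.1 h.2⟩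
  by_contra hv
  have hu := ((T.isTree.connected.preconnected u T.root).deleteEdge_or (v := v)).resolve_right hv
  rw [Sym2.eq_swap] at hu
  exact towardRel_no_both T u v h (towardRel_of_reachable T h.1.symm hu)

lemma towardRel_root_of_adj (T : RootedTree n) {u : Fin n} (h : T.graph.Adj u T.root) :
    towardRel T u T.root :=
  (towardRel_iff T).mpr ⟨h, .rfl⟩

lemma towardRel_iff_of_adj_roots {T T' : RootedTree n} (hg : T.graph = T'.graph)
    (hadj : T.graph.Adj T.root T'.root) {u v : Fin n} (huv : s(u, v) ≠ s(T.root, T'.root)) :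
    towardRel T u v ↔ towardRel T' u v := by
  have hroots : (T.graph.deleteEdges {s(u, v)}).Reachable T.root T'.root :=
    Adj.reachable (by simp [hadj, huv.symm])
  rw [towardRel_iff, towardRel_iff, ← hg]
  exact and_congr_right fun _ => ⟨fun h => h.trans hroots, fun h => h.trans hroots.symm⟩

def IsReversal (D D' : DirTree n) (a b : Fin n) : Prop :=
  D.graph = D'.graph ∧ D.rel a b ∧ D'.rel b a ∧
    ∀ u v : Fin n, s(u, v) ≠ s(a, b) → (D.rel u v ↔ D'.rel u v)

lemma IsReversal.mem_arrowReversalRels {D D' : DirTree n} {a b : Fin n}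
    (h : IsReversal D D' a b) : single D 1 + single D' 1 ∈ arrowReversalRels n :=
  ⟨D, D', a, b, h.1, h.2.1, h.2.2.1, h.2.2.2, rfl⟩

lemma isReversal_orient {T T' : RootedTree n} (hg : T.graph = T'.graph)
    (hadj : T.graph.Adj T.root T'.root) : IsReversal (orient T) (orient T') T'.root T.root :=
  ⟨hg, towardRel_root_of_adj T hadj.symm, towardRel_root_of_adj T' (hg ▸ hadj),
    fun _ _ huv => towardRel_iff_of_adj_roots hg hadj fun h => huv (h.trans Sym2.eq_swap)⟩

lemma towardRel_iff_of_le {T : RootedTree n} {F : SimpleGraph (Fin n)} (hF : F ≤ T.graph)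
    {u v m : Fin n} (huv : F.Adj u v) (hum : F.Reachable u m)
    (hm : (T.graph \ F).Reachable m T.root) :
    towardRel T u v ↔ (F.deleteEdges {s(u, v)}).Reachable v m := by
  have hFT : F.deleteEdges {s(u, v)} ≤ T.graph.deleteEdges {s(u, v)} := deleteEdges_mono hF
  have hmr : (T.graph.deleteEdges {s(u, v)}).Reachable m T.root := hm.mono fun x y hxy => by
    refine (deleteEdges_adj ..).mpr ⟨hxy.1, fun he => hxy.2 ?_⟩
    rwa [← mem_edgeSet, Set.mem_singleton_iff.mp he]
  rw [towardRel_iff, and_iff_right (hF huv)]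
  refine ⟨fun hv => ?_, fun hv => (hv.mono hFT).trans hmr⟩
  refine (hum.deleteEdge_or (v := v)).resolve_left fun hu => ?_
  exact T.isTree.isAcyclic.not_reachable_deleteEdge (hF huv)
    ((hu.mono hFT).trans (hmr.trans hv.symm))

def IsAnchored (F : SimpleGraph (Fin n)) (A : Set (Fin n)) (T : RootedTree n) : Prop :=
  F ≤ T.graph ∧ ∀ m ∈ A, (T.graph \ F).Reachable m T.root

/-- Each edge of `F` points toward the anchor of its component. -/
lemma IsAnchored.towardRel_iff {F : SimpleGraph (Fin n)} {A : Set (Fin n)}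
    (hA : ∀ v, ∃ m ∈ A, F.Reachable v m) {T T' : RootedTree n} (hT : IsAnchored F A T)
    (hT' : IsAnchored F A T') {u v : Fin n} (huv : F.Adj u v) :
    towardRel T u v ↔ towardRel T' u v := by
  obtain ⟨m, hmA, hum⟩ := hA u
  rw [towardRel_iff_of_le hT.1 huv hum (hT.2 m hmA),
    towardRel_iff_of_le hT'.1 huv hum (hT'.2 m hmA)]

namespace ThreeComponentForest

variable {F : SimpleGraph (Fin n)} {a b c : Fin n}

lemma rotate (h : ThreeComponentForest F a b c) : ThreeComponentForest F b c a :=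
  ⟨h.1, fun v => (h.2.1 v).rotate, h.2.2.2.2, fun hba => h.2.2.1 hba.symm,
    fun hca => h.2.2.2.1 hca.symm⟩

lemma exists_reachable (h : ThreeComponentForest F a b c) (v : Fin n) :
    ∃ m ∈ ({a, b, c} : Set (Fin n)), F.Reachable v m := by
  rcases h.2.1 v with hv | hv | hv <;> exact ⟨_, by simp, hv⟩

lemma ne (h : ThreeComponentForest F a b c) : a ≠ b ∧ a ≠ c ∧ b ≠ c :=
  ⟨fun hab => h.2.2.1 (hab ▸ .rfl), fun hac => h.2.2.2.1 (hac ▸ .rfl),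
    fun hbc => h.2.2.2.2 (hbc ▸ .rfl)⟩

end ThreeComponentForest

lemma DirTree.rel_iff_of_graph_eq {D : DirTree n} {F : SimpleGraph (Fin n)} {x r y : Fin n}
    (hD : D.graph = F ⊔ fromEdgeSet {s(x, r), s(r, y)}) (hxr : D.rel x r) (hry : D.rel r y)
    (u v : Fin n) : D.rel u v ↔ (F.Adj u v ∧ D.rel u v) ∨ (u = x ∧ v = r) ∨ (u = r ∧ v = y) := by
  refine ⟨fun h => ?_, ?_⟩
  · have hadj := D.rel_adj u v h
    rw [hD, sup_adj, fromEdgeSet_adj] at hadj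
    rcases hadj with hF | ⟨he, -⟩
    · exact Or.inl ⟨hF, h⟩
    simp only [Set.mem_insert_iff, Set.mem_singleton_iff, Sym2.eq_iff] at he
    rcases he with (⟨rfl, rfl⟩ | ⟨rfl, rfl⟩) | (⟨rfl, rfl⟩ | ⟨rfl, rfl⟩)
    · exact Or.inr (Or.inl ⟨rfl, rfl⟩)
    · exact absurd h (D.no_both _ _ hxr)
    · exact Or.inr (Or.inr ⟨rfl, rfl⟩)
    · exact absurd h (D.no_both _ _ hry)
  · rintro (h | ⟨rfl, rfl⟩ | ⟨rfl, rfl⟩)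
    exacts [h.2, hxr, hry]

section Chain

variable {F : SimpleGraph (Fin n)} {x r y : Fin n} {T : RootedTree n}

lemma isAnchored_chain (h : ThreeComponentForest F x r y)
    (hT : T.graph = F ⊔ fromEdgeSet {s(x, r), s(r, y)}) (hroot : T.root = y) :
    IsAnchored F {x, r, y} T := by
  obtain ⟨-, -, hxr, -, hry⟩ := h
  have hadj : ∀ {p q}, ¬ F.Reachable p q → s(p, q) ∈ ({s(x, r), s(r, y)} : Set _) →
      (T.graph \ F).Adj p q := fun hpq he => by
    rw [sdiff_adj, hT]
    exact ⟨Or.inr ⟨he, fun h => hpq (h ▸ .rfl)⟩, fun h => hpq h.reachable⟩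
  have hr : (T.graph \ F).Reachable r T.root := hroot ▸ (hadj hry (by simp)).reachable
  refine ⟨hT ▸ le_sup_left, ?_⟩
  simp only [Set.mem_insert_iff, Set.mem_singleton_iff, forall_eq_or_imp, forall_eq]
  exact ⟨(hadj hxr (by simp)).reachable.trans hr, hr, hroot ▸ .rfl⟩

lemma towardRel_chain_iff (h : ThreeComponentForest F x r y)
    (hT : T.graph = F ⊔ fromEdgeSet {s(x, r), s(r, y)}) (hroot : T.root = y)
    {T₀ : RootedTree n} (hT₀ : IsAnchored F {x, r, y} T₀) (u v : Fin n) :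
    towardRel T u v ↔ (F.Adj u v ∧ towardRel T₀ u v) ∨ (u = x ∧ v = r) ∨ (u = r ∧ v = y) := by
  obtain ⟨hxr, hxy, hry⟩ := h.ne
  have hTry : T.graph.Adj r y := by simp [hT, hry]
  have hry' : towardRel T r y := hroot ▸ towardRel_root_of_adj T (hroot ▸ hTry)
  have hxr' : towardRel T x r := (towardRel_iff T).mpr ⟨by simp [hT, hxr], hroot ▸
    Adj.reachable (by simp [hTry, hxr.symm, hxy.symm])⟩
  refine ((orient T).rel_iff_of_graph_eq hT hxr' hry' u v).trans ?_
  exact or_congr_left (and_congr_right fun huv =>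
    (isAnchored_chain h hT hroot).towardRel_iff h.exists_reachable hT₀ huv)

end Chain

lemma towardRel_arnold_chains {F : SimpleGraph (Fin n)} {a b c : Fin n}
    (h : ThreeComponentForest F a b c) {S₁ S₂ S₃ : RootedTree n}
    (hS₁ : S₁.graph = F ⊔ fromEdgeSet {s(a, b), s(b, c)}) (hr₁ : S₁.root = c)
    (hS₂ : S₂.graph = F ⊔ fromEdgeSet {s(b, c), s(c, a)}) (hr₂ : S₂.root = a)
    (hS₃ : S₃.graph = F ⊔ fromEdgeSet {s(a, b), s(c, a)}) (hr₃ : S₃.root = b) (u v : Fin n) :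
    (towardRel S₁ u v ↔ (F.Adj u v ∧ towardRel S₁ u v) ∨ (u = a ∧ v = b) ∨ (u = b ∧ v = c)) ∧
    (towardRel S₂ u v ↔ (F.Adj u v ∧ towardRel S₁ u v) ∨ (u = b ∧ v = c) ∨ (u = c ∧ v = a)) ∧
    (towardRel S₃ u v ↔ (F.Adj u v ∧ towardRel S₁ u v) ∨ (u = a ∧ v = b) ∨ (u = c ∧ v = a)) := by
  have hA : IsAnchored F {a, b, c} S₁ := isAnchored_chain h hS₁ hr₁
  have rot : ∀ x y z : Fin n, ({y, z, x} : Set (Fin n)) = {x, y, z} := fun x y z => by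
    rw [Set.insert_comm x y, Set.pair_comm x z]
  refine ⟨towardRel_chain_iff h hS₁ hr₁ hA u v,
    towardRel_chain_iff h.rotate hS₂ hr₂ (by rwa [rot]) u v, ?_⟩
  refine (towardRel_chain_iff h.rotate.rotate (by rw [hS₃, Set.pair_comm]) hr₃
    (by rwa [rot, rot]) u v).trans (or_congr_right or_comm)

lemma DirTree.ext {D D' : DirTree n} (hg : D.graph = D'.graph) (hr : D.rel = D'.rel) :
    D = D' := by
  cases D; cases D'; cases hg; cases hr; rfl

def disagreement {V : Type*} (σ σ' : V → V → Prop) : Set (Sym2 V) :=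
  {e | ∃ x y, e = s(x, y) ∧ σ x y ∧ σ' y x}

noncomputable def orientationSign (D D' : DirTree n) : ℚ :=
  (-1) ^ (disagreement D.rel D'.rel).ncard

section Disagreement

variable {D D' D'' : DirTree n}

lemma adj_of_mem_disagreement {x y : Fin n} (h : s(x, y) ∈ disagreement D.rel D'.rel) :
    D.graph.Adj x y := by
  obtain ⟨p, q, he, hpq, -⟩ := h
  rcases Sym2.eq_iff.mp he with ⟨rfl, rfl⟩ | ⟨rfl, rfl⟩
  exacts [D.rel_adj _ _ hpq, (D.rel_adj _ _ hpq).symm]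

lemma mem_disagreement_iff (hg : D.graph = D'.graph) {x y : Fin n} (hxy : D.graph.Adj x y) :
    s(x, y) ∈ disagreement D.rel D'.rel ↔ ¬ (D.rel x y ↔ D'.rel x y) := by
  have h := D.total x y hxy
  have h' := D'.total x y (hg ▸ hxy)
  have hn := D.no_both x y
  have hn' := D'.no_both x y
  constructor
  · rintro ⟨p, q, he, hpq, hqp⟩
    rcases Sym2.eq_iff.mp he with ⟨rfl, rfl⟩ | ⟨rfl, rfl⟩ <;> tauto
  · intro hne
    rcases h with hxy | hyx
    · exact ⟨x, y, rfl, hxy, h'.resolve_left fun h => hne (iff_of_true hxy h)⟩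
    · exact ⟨y, x, Sym2.eq_swap, hyx, h'.resolve_right fun h => hne ⟨fun h' => absurd h'
        (D.no_both y x hyx), fun h'' => absurd h (D'.no_both x y h'')⟩⟩

lemma disagreement_self : disagreement D.rel D.rel = ∅ :=
  Set.eq_empty_of_forall_notMem fun _ ⟨x, y, _, hxy, hyx⟩ => D.no_both x y hxy hyx

lemma eq_of_disagreement_eq_empty (hg : D.graph = D'.graph)
    (h : disagreement D.rel D'.rel = ∅) : D = D' := by
  refine DirTree.ext hg (funext₂ fun x y => propext ?_)
  by_cases hxy : D.graph.Adj x y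
  · by_contra hne
    simpa [h] using (mem_disagreement_iff hg hxy).mpr hne
  · exact iff_of_false (fun h => hxy (D.rel_adj x y h)) (fun h => hxy (hg ▸ D'.rel_adj x y h))

lemma disagreement_trans (h₁ : D.graph = D'.graph) (h₂ : D'.graph = D''.graph) :
    disagreement D.rel D''.rel =
      symmDiff (disagreement D.rel D'.rel) (disagreement D'.rel D''.rel) := by
  ext e
  induction e using Sym2.ind with
  | _ x y =>
    by_cases hxy : D.graph.Adj x y
    · rw [Set.mem_symmDiff, mem_disagreement_iff (h₁.trans h₂) hxy,
        mem_disagreement_iff h₁ hxy, mem_disagreement_iff h₂ (h₁ ▸ hxy)]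
      tauto
    · have n₁ : s(x, y) ∉ disagreement D.rel D''.rel := (hxy <| adj_of_mem_disagreement ·)
      have n₂ : s(x, y) ∉ disagreement D.rel D'.rel := (hxy <| adj_of_mem_disagreement ·)
      have n₃ : s(x, y) ∉ disagreement D'.rel D''.rel := (hxy <| h₁ ▸ adj_of_mem_disagreement ·)
      simp [Set.mem_symmDiff, n₁, n₂, n₃]

lemma orientationSign_self : orientationSign D D = 1 := by
  rw [orientationSign, disagreement_self, Set.ncard_empty, pow_zero]

lemma orientationSign_trans (h₁ : D.graph = D'.graph) (h₂ : D'.graph = D''.graph) :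
    orientationSign D D'' = orientationSign D D' * orientationSign D' D'' := by
  rw [orientationSign, disagreement_trans h₁ h₂, Set.neg_one_pow_ncard_symmDiff]; rfl

lemma disagreement_eq_of_rel_iff {σ σ' g : Fin n → Fin n → Prop}
    (hD : ∀ u v, D.rel u v ↔ σ u v ∨ g u v) (hD' : ∀ u v, D'.rel u v ↔ σ' u v ∨ g u v) :
    disagreement D.rel D'.rel = disagreement σ σ' := by
  ext e
  constructor
  · rintro ⟨x, y, rfl, hxy, hyx⟩
    rcases (hD x y).mp hxy with hσ | hg
    · rcases (hD' y x).mp hyx with hσ' | hg'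
      · exact ⟨x, y, rfl, hσ, hσ'⟩
      · exact absurd ((hD y x).mpr (Or.inr hg')) (D.no_both x y hxy)
    · exact absurd ((hD' x y).mpr (Or.inr hg)) (D'.no_both y x hyx)
  · rintro ⟨x, y, rfl, hσ, hσ'⟩
    exact ⟨x, y, rfl, (hD x y).mpr (Or.inl hσ), (hD' y x).mpr (Or.inl hσ')⟩

lemma IsReversal.orientationSign_eq {a b : Fin n} (h : IsReversal D D' a b) :
    orientationSign D D' = -1 := by
  obtain ⟨-, hab, hba, hoff⟩ := h
  have : disagreement D.rel D'.rel = {s(a, b)} := by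
    refine Set.eq_singleton_iff_unique_mem.mpr ⟨⟨a, b, rfl, hab, hba⟩, ?_⟩
    rintro _ ⟨x, y, rfl, hxy, hyx⟩
    by_contra hne
    exact D'.no_both x y ((hoff x y hne).mp hxy) hyx
  rw [orientationSign, this, Set.ncard_singleton, pow_one]

end Disagreement

def DirTree.reverse (D : DirTree n) {u v : Fin n} (h : D.rel u v) : DirTree n where
  graph := D.graph
  isTree := D.isTree
  rel x y := (D.rel x y ∧ ¬ (x = u ∧ y = v)) ∨ (x = v ∧ y = u)
  rel_adj := by
    rintro x y (⟨hxy, -⟩ | ⟨hx, hy⟩)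
    exacts [D.rel_adj x y hxy, hx ▸ hy ▸ (D.rel_adj u v h).symm]
  total x y hxy := by
    by_cases h₁ : x = u ∧ y = v
    · exact Or.inr (Or.inr ⟨h₁.2, h₁.1⟩)
    by_cases h₂ : y = u ∧ x = v
    · exact Or.inl (Or.inr ⟨h₂.2, h₂.1⟩)
    exact (D.total x y hxy).imp (fun h => Or.inl ⟨h, h₁⟩) (fun h => Or.inl ⟨h, h₂⟩)
  no_both x y := by
    rintro (⟨hxy, h₁⟩ | ⟨hx, hy⟩) (⟨hyx, h₂⟩ | ⟨hy', hx'⟩)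
    · exact D.no_both x y hxy hyx
    · exact h₁ ⟨hx', hy'⟩
    · exact h₂ ⟨hy, hx⟩
    · exact (D.rel_adj u v h).ne (hx'.symm.trans hx)

lemma DirTree.isReversal_reverse (D : DirTree n) {u v : Fin n} (h : D.rel u v) :
    IsReversal D (D.reverse h) u v := by
  refine ⟨rfl, h, Or.inr ⟨rfl, rfl⟩, fun x y hne => ?_⟩
  have huv : ¬ (x = u ∧ y = v) := fun ⟨hx, hy⟩ => hne (by rw [hx, hy])
  have hvu : ¬ (x = v ∧ y = u) := fun ⟨hx, hy⟩ => hne (by rw [hx, hy, Sym2.eq_swap])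
  exact ⟨fun hxy => Or.inl ⟨hxy, huv⟩, fun hxy => hxy.elim And.left (absurd · hvu)⟩

lemma disagreement_reverse {D D' : DirTree n} {u v : Fin n} (h : D.rel u v) (h' : D'.rel v u) :
    disagreement (D.reverse h).rel D'.rel = disagreement D.rel D'.rel \ {s(u, v)} := by
  ext e
  constructor
  · rintro ⟨x, y, rfl, ⟨hxy, hne⟩ | ⟨rfl, rfl⟩, hyx⟩
    · refine ⟨⟨x, y, rfl, hxy, hyx⟩, fun he => ?_⟩
      rcases Sym2.eq_iff.mp he with ⟨rfl, rfl⟩ | ⟨rfl, rfl⟩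
      exacts [hne ⟨rfl, rfl⟩, D.no_both _ _ h hxy]
    · exact absurd hyx (D'.no_both _ _ h')
  · rintro ⟨⟨x, y, rfl, hxy, hyx⟩, hne⟩
    exact ⟨x, y, rfl, Or.inl ⟨hxy, fun ⟨hx, hy⟩ => hne (by rw [hx, hy]; rfl)⟩, hyx⟩

noncomputable def trClass (T : RootedTree n) : Tr n ⧸ TrRels n :=
  Submodule.Quotient.mk (single T 1)

noncomputable def grClass (D : DirTree n) : Gr n ⧸ GrRels n :=
  Submodule.Quotient.mk (single D 1)

lemma IsReversal.grClass_eq_neg {D D' : DirTree n} {a b : Fin n} (h : IsReversal D D' a b) :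
    grClass D = -grClass D' :=
  Submodule.Quotient.mk_eq_neg_of_add_mem (Submodule.subset_span (Or.inl h.mem_arrowReversalRels))

theorem grClass_eq_orientationSign_smul {D D' : DirTree n} (hg : D.graph = D'.graph) :
    grClass D = orientationSign D D' • grClass D' := by
  induction hk : (disagreement D.rel D'.rel).ncard generalizing D with
  | zero =>
    obtain rfl := eq_of_disagreement_eq_empty hg ((Set.ncard_eq_zero).mp hk)
    rw [orientationSign_self, one_smul]
  | succ k ih =>
    obtain ⟨_, u, v, rfl, huv, hvu⟩ := Set.nonempty_of_ncard_ne_zero (hk.trans_ne k.succ_ne_zero)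
    have hk' : (disagreement (D.reverse huv).rel D'.rel).ncard = k := by
      rw [disagreement_reverse huv hvu,
        Set.ncard_sdiff_singleton_of_mem (s := disagreement D.rel D'.rel) ⟨u, v, rfl, huv, hvu⟩,
        hk, Nat.add_sub_cancel]
    rw [(D.isReversal_reverse huv).grClass_eq_neg, ih (D := D.reverse huv) hg hk', orientationSign,
      orientationSign, hk, hk', pow_succ, mul_neg_one, neg_smul]

lemma trClass_eq_neg {T T' : RootedTree n} (hg : T.graph = T'.graph)
    (hadj : T.graph.Adj T.root T'.root) : trClass T = -trClass T' :=
  Submodule.Quotient.mk_eq_neg_of_add_mem (Submodule.subset_span (Or.inl ⟨T, T', hg, hadj, rfl⟩))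

lemma trClass_rootArnold {F : SimpleGraph (Fin n)} {a b c : Fin n} {T₁ T₂ T₃ : RootedTree n}
    (h : ThreeComponentForest F a b c)
    (hg₁ : T₁.graph = F ⊔ fromEdgeSet {s(a, b), s(a, c)}) (hr₁ : T₁.root = a)
    (hg₂ : T₂.graph = F ⊔ fromEdgeSet {s(a, b), s(b, c)}) (hr₂ : T₂.root = b)
    (hg₃ : T₃.graph = F ⊔ fromEdgeSet {s(a, c), s(b, c)}) (hr₃ : T₃.root = c) :
    trClass T₁ + trClass T₂ + trClass T₃ = 0 := by
  have : single T₁ (1 : ℚ) + single T₂ 1 + single T₃ 1 ∈ TrRels n :=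
    Submodule.subset_span (Or.inr ⟨F, a, b, c, T₁, T₂, T₃, h, hg₁, hr₁, hg₂, hr₂, hg₃, hr₃, rfl⟩)
  simpa only [trClass, Submodule.Quotient.mk_add] using
    (Submodule.Quotient.mk_eq_zero _).mpr this

noncomputable def signedClass (D : DirTree n) (T : RootedTree n) : Tr n ⧸ TrRels n :=
  orientationSign D (orient T) • trClass T

/-- Moving the root across an edge flips both the sign and the class. -/
lemma signedClass_eq (D : DirTree n) {T T' : RootedTree n} (hT : T.graph = D.graph)
    (hT' : T'.graph = D.graph) : signedClass D T = signedClass D T' := by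
  obtain ⟨G, hG, r⟩ := T
  obtain ⟨G', hG', r'⟩ := T'
  dsimp only at hT hT'
  subst hT hT'
  refine D.isTree.connected.preconnected.eq_of_forall_adj
    (f := fun r => signedClass D ⟨D.graph, D.isTree, r⟩) (fun u v huv => ?_) r r'
  have hrev := isReversal_orient (T := ⟨D.graph, D.isTree, v⟩) (T' := ⟨D.graph, D.isTree, u⟩)
    rfl huv.symm
  rw [signedClass, signedClass,
    trClass_eq_neg (T := ⟨D.graph, D.isTree, u⟩) (T' := ⟨D.graph, D.isTree, v⟩) rfl huv,
    orientationSign_trans (D := D) (D' := orient ⟨D.graph, D.isTree, v⟩)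
      (D'' := orient ⟨D.graph, D.isTree, u⟩) rfl rfl, hrev.orientationSign_eq,
    mul_neg_one, neg_smul, smul_neg, neg_neg]

noncomputable def unorient (D : DirTree n) : Tr n ⧸ TrRels n :=
  signedClass D ⟨D.graph, D.isTree, D.isTree.connected.nonempty.some⟩

lemma unorient_eq (D : DirTree n) {T : RootedTree n} (hT : T.graph = D.graph) :
    unorient D = signedClass D T :=
  signedClass_eq D rfl hT

lemma unorient_orient (T : RootedTree n) : unorient (orient T) = trClass T := by
  rw [unorient_eq (orient T) (T := T) rfl, signedClass, orientationSign_self, one_smul]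

lemma unorient_eq_smul {D D' : DirTree n} (hg : D.graph = D'.graph) :
    unorient D = orientationSign D D' • unorient D' := by
  obtain ⟨r⟩ := D'.isTree.connected.nonempty
  rw [unorient_eq D (T := ⟨D'.graph, D'.isTree, r⟩) hg.symm,
    unorient_eq D' (T := ⟨D'.graph, D'.isTree, r⟩) rfl, signedClass, signedClass,
    orientationSign_trans (D'' := orient ⟨D'.graph, D'.isTree, r⟩) hg rfl, mul_smul]

lemma IsReversal.unorient_add_eq_zero {D D' : DirTree n} {a b : Fin n}
    (h : IsReversal D D' a b) : unorient D + unorient D' = 0 := by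
  rw [unorient_eq_smul h.1, h.orientationSign_eq, neg_one_smul, neg_add_cancel]

/-- Rerooting each tree of a root-Arnold relation at the end of its chain turns it into an
Arnold relation, up to one arrow reversal per tree. -/
lemma grClass_orient_rootArnold {F : SimpleGraph (Fin n)} {a b c : Fin n}
    {T₁ T₂ T₃ : RootedTree n} (h : ThreeComponentForest F a b c)
    (hg₁ : T₁.graph = F ⊔ fromEdgeSet {s(a, b), s(a, c)}) (hr₁ : T₁.root = a)
    (hg₂ : T₂.graph = F ⊔ fromEdgeSet {s(a, b), s(b, c)}) (hr₂ : T₂.root = b)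
    (hg₃ : T₃.graph = F ⊔ fromEdgeSet {s(a, c), s(b, c)}) (hr₃ : T₃.root = c) :
    grClass (orient T₁) + grClass (orient T₂) + grClass (orient T₃) = 0 := by
  obtain ⟨hab, hac, hbc⟩ := h.ne
  set S₁ : RootedTree n := ⟨T₂.graph, T₂.isTree, c⟩
  set S₂ : RootedTree n := ⟨T₃.graph, T₃.isTree, a⟩
  set S₃ : RootedTree n := ⟨T₁.graph, T₁.isTree, b⟩
  have hS₂ : S₂.graph = F ⊔ fromEdgeSet {s(b, c), s(c, a)} := by
    rw [hg₃, Set.pair_comm, Sym2.eq_swap (a := a)]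
  have hS₃ : S₃.graph = F ⊔ fromEdgeSet {s(a, b), s(c, a)} := by
    rw [hg₁, Sym2.eq_swap (a := a) (b := c)]
  have hS := towardRel_arnold_chains h (S₁ := S₁) hg₂ rfl hS₂ rfl hS₃ rfl
  have hF : F ≤ S₁.graph := hg₂ ▸ le_sup_left
  have harnold : single (orient S₁) (1 : ℚ) + single (orient S₂) 1 + single (orient S₃) 1 ∈
      arnoldRels n :=
    ⟨F, fun u v => F.Adj u v ∧ towardRel S₁ u v, a, b, c, _, _, _, h, fun _ _ h => h.1,
      fun u v huv => (towardRel_total S₁ u v (hF huv)).imp (⟨huv, ·⟩) (⟨huv.symm, ·⟩),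
      fun u v h h' => towardRel_no_both S₁ u v h.2 h'.2,
      hg₂, fun u v => (hS u v).1, hS₂, fun u v => (hS u v).2.1, hS₃, fun u v => (hS u v).2.2, rfl⟩
  have hzero : grClass (orient S₁) + grClass (orient S₂) + grClass (orient S₃) = 0 := by
    have : _ ∈ GrRels n := Submodule.subset_span (Or.inr harnold)
    simpa only [grClass, Submodule.Quotient.mk_add] using
      (Submodule.Quotient.mk_eq_zero _).mpr this
  rw [(isReversal_orient (T := T₁) (T' := S₃) rfl (by simp [S₃, hr₁, hg₁, hab])).grClass_eq_neg,
    (isReversal_orient (T := T₂) (T' := S₁) rfl (by simp [S₁, hr₂, hg₂, hbc])).grClass_eq_neg,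
    (isReversal_orient (T := T₃) (T' := S₂) rfl
      (by simp [S₂, hr₃, hg₃, hac.symm])).grClass_eq_neg]
  linear_combination (norm := module) -hzero

/-- Each directed tree of an Arnold relation differs from the orientation of its chain toward
the end on the same set of edges of `H`. -/
lemma unorient_arnold {H : SimpleGraph (Fin n)} {ρ : Fin n → Fin n → Prop} {a b c : Fin n}
    {D₁ D₂ D₃ : DirTree n} (h : ThreeComponentForest H a b c)
    (hg₁ : D₁.graph = H ⊔ fromEdgeSet {s(a, b), s(b, c)})
    (hi₁ : ∀ u v, D₁.rel u v ↔ ρ u v ∨ (u = a ∧ v = b) ∨ (u = b ∧ v = c))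
    (hg₂ : D₂.graph = H ⊔ fromEdgeSet {s(b, c), s(c, a)})
    (hi₂ : ∀ u v, D₂.rel u v ↔ ρ u v ∨ (u = b ∧ v = c) ∨ (u = c ∧ v = a))
    (hg₃ : D₃.graph = H ⊔ fromEdgeSet {s(a, b), s(c, a)})
    (hi₃ : ∀ u v, D₃.rel u v ↔ ρ u v ∨ (u = a ∧ v = b) ∨ (u = c ∧ v = a)) :
    unorient D₁ + unorient D₂ + unorient D₃ = 0 := by
  obtain ⟨hab, hac, hbc⟩ := h.ne
  set S₁ : RootedTree n := ⟨D₁.graph, D₁.isTree, c⟩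
  set S₂ : RootedTree n := ⟨D₂.graph, D₂.isTree, a⟩
  set S₃ : RootedTree n := ⟨D₃.graph, D₃.isTree, b⟩
  have hS := towardRel_arnold_chains h (S₁ := S₁) hg₁ rfl (S₂ := S₂) hg₂ rfl (S₃ := S₃) hg₃ rfl
  set ε : ℚ := (-1) ^ (disagreement ρ fun u v => H.Adj u v ∧ towardRel S₁ u v).ncard
  have e₁ : unorient D₁ = ε • trClass S₁ := by
    rw [unorient_eq D₁ (T := S₁) rfl, signedClass, orientationSign,
      disagreement_eq_of_rel_iff hi₁ fun u v => (hS u v).1]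
  have e₂ : unorient D₂ = ε • trClass S₂ := by
    rw [unorient_eq D₂ (T := S₂) rfl, signedClass, orientationSign,
      disagreement_eq_of_rel_iff hi₂ fun u v => (hS u v).2.1]
  have e₃ : unorient D₃ = ε • trClass S₃ := by
    rw [unorient_eq D₃ (T := S₃) rfl, signedClass, orientationSign,
      disagreement_eq_of_rel_iff hi₃ fun u v => (hS u v).2.2]
  have hzero := trClass_rootArnold (T₁ := ⟨D₃.graph, D₃.isTree, a⟩)
    (T₂ := ⟨D₁.graph, D₁.isTree, b⟩) (T₃ := ⟨D₂.graph, D₂.isTree, c⟩) h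
    (hg₃.trans (by rw [Sym2.eq_swap (a := c)])) rfl hg₁ rfl
    (hg₂.trans (by rw [Set.pair_comm, Sym2.eq_swap (a := c)])) rfl
  rw [e₁, e₂, e₃,
    trClass_eq_neg (T := S₁) (T' := ⟨D₁.graph, D₁.isTree, b⟩) rfl (by simp [S₁, hg₁, hbc.symm]),
    trClass_eq_neg (T := S₂) (T' := ⟨D₂.graph, D₂.isTree, c⟩) rfl (by simp [S₂, hg₂, hac]),
    trClass_eq_neg (T := S₃) (T' := ⟨D₃.graph, D₃.isTree, a⟩) rfl (by simp [S₃, hg₃, hab.symm])]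
  linear_combination (norm := module) -ε • hzero

lemma orientMap_single (T : RootedTree n) (r : ℚ) :
    orientMap n (single T r) = single (orient T) r := by
  simp [orientMap]

theorem map_orientMap_TrRels_le : (TrRels n).map (orientMap n) ≤ GrRels n := by
  rw [TrRels, Submodule.map_span, Submodule.span_le]
  rintro _ ⟨_, ⟨T, T', hg, hadj, rfl⟩ |
    ⟨F, a, b, c, T₁, T₂, T₃, h, hg₁, hr₁, hg₂, hr₂, hg₃, hr₃, rfl⟩, rfl⟩ <;>
    simp only [map_add, orientMap_single, SetLike.mem_coe]
  · exact Submodule.subset_span (Or.inl (isReversal_orient hg hadj).mem_arrowReversalRels)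
  · rw [← Submodule.Quotient.mk_eq_zero, Submodule.Quotient.mk_add, Submodule.Quotient.mk_add]
    exact grClass_orient_rootArnold h hg₁ hr₁ hg₂ hr₂ hg₃ hr₃

noncomputable def orientQuot (n : ℕ) : (Tr n ⧸ TrRels n) →ₗ[ℚ] (Gr n ⧸ GrRels n) :=
  (TrRels n).liftQ ((GrRels n).mkQ ∘ₗ orientMap n) <| by
    rw [LinearMap.ker_comp, Submodule.ker_mkQ, ← Submodule.map_le_iff_le_comap]
    exact map_orientMap_TrRels_le

lemma GrRels_le_ker_unorient :
    GrRels n ≤ LinearMap.ker (linearCombination ℚ (unorient (n := n))) := by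
  rw [GrRels, Submodule.span_le]
  rintro _ (⟨D, D', a, b, hg, hab, hba, hoff, rfl⟩ |
    ⟨H, ρ, a, b, c, D₁, D₂, D₃, h, -, -, -, hg₁, hi₁, hg₂, hi₂, hg₃, hi₃, rfl⟩) <;>
    simp only [SetLike.mem_coe, LinearMap.mem_ker, map_add, linearCombination_single, one_smul]
  · exact IsReversal.unorient_add_eq_zero ⟨hg, hab, hba, hoff⟩
  · exact unorient_arnold h hg₁ hi₁ hg₂ hi₂ hg₃ hi₃

noncomputable def unorientQuot (n : ℕ) : (Gr n ⧸ GrRels n) →ₗ[ℚ] (Tr n ⧸ TrRels n) :=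
  (GrRels n).liftQ (linearCombination ℚ unorient) GrRels_le_ker_unorient

lemma orientQuot_trClass (T : RootedTree n) : orientQuot n (trClass T) = grClass (orient T) := by
  simp [orientQuot, trClass, grClass, orientMap_single]

lemma unorientQuot_grClass (D : DirTree n) : unorientQuot n (grClass D) = unorient D := by
  simp [unorientQuot, grClass]

lemma orientQuot_signedClass (D : DirTree n) {T : RootedTree n} (hT : T.graph = D.graph) :
    orientQuot n (signedClass D T) = grClass D := by
  rw [signedClass, map_smul, orientQuot_trClass,
    ← grClass_eq_orientationSign_smul (D' := orient T) hT.symm]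

lemma orientQuot_comp_unorientQuot : orientQuot n ∘ₗ unorientQuot n = LinearMap.id := by
  refine Submodule.linearMap_qext _ (Finsupp.lhom_ext' fun D => LinearMap.ext_ring ?_)
  simp only [LinearMap.comp_apply, Submodule.mkQ_apply, Finsupp.lsingle_apply, LinearMap.id_apply]
  rw [← grClass, unorientQuot_grClass, unorient, orientQuot_signedClass D rfl]

lemma unorientQuot_comp_orientQuot : unorientQuot n ∘ₗ orientQuot n = LinearMap.id := by
  refine Submodule.linearMap_qext _ (Finsupp.lhom_ext' fun T => LinearMap.ext_ring ?_)
  simp only [LinearMap.comp_apply, Submodule.mkQ_apply, Finsupp.lsingle_apply, LinearMap.id_apply]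
  rw [← trClass, orientQuot_trClass, unorientQuot_grClass, unorient_orient]

noncomputable def orientEquiv (n : ℕ) : (Tr n ⧸ TrRels n) ≃ₗ[ℚ] (Gr n ⧸ GrRels n) :=
  LinearEquiv.ofLinearMap (orientQuot n) (unorientQuot n) orientQuot_comp_unorientQuot
    unorientQuot_comp_orientQuot

end EilTrees

open EilTrees in
theorem rooted_trees_iso_directed_graphs_general (n : ℕ) :
    (TrRels n).map (orientMap n) ≤ GrRels n ∧
    ∃ e : (Tr n ⧸ TrRels n) ≃ₗ[ℚ] (Gr n ⧸ GrRels n),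
      (e : (Tr n ⧸ TrRels n) →ₗ[ℚ] (Gr n ⧸ GrRels n)) ∘ₗ (TrRels n).mkQ =
        (GrRels n).mkQ ∘ₗ orientMap n :=
  ⟨map_orientMap_TrRels_le, orientEquiv n, Submodule.liftQ_mkQ _ _ _⟩

open EilTrees in
/-- For `n ≥ 1`, the linear map `Tr(n) → Gr(n)` sending a rooted
labeled tree `(T, r)` to the directed tree `(T, o_r)`, where `o_r` orients every edge
toward the root, carries the span of the root-change and root-Arnold relations into
the span of the arrow-reversal and Arnold relations, and it induces an isomorphism of
quotient vector spaces
`Tr(n)/(root change, root Arnold) ≅ Gr(n)/(arrow reversal, Arnold)`. -/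
theorem rooted_trees_iso_directed_graphs (n : ℕ) (hn : 1 ≤ n) :
    (TrRels n).map (orientMap n) ≤ GrRels n ∧
    ∃ e : (Tr n ⧸ TrRels n) ≃ₗ[ℚ] (Gr n ⧸ GrRels n),
      (e : (Tr n ⧸ TrRels n) →ₗ[ℚ] (Gr n ⧸ GrRels n)) ∘ₗ (TrRels n).mkQ =
        (GrRels n).mkQ ∘ₗ orientMap n :=
  rooted_trees_iso_directed_graphs_general n
end
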